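/- arXiv:1608.00867 — 6 statements merged into one kernel-verified Lean document; each statement's English description precedes it below -/
import Mathlib

section
/- The valuation of a causal literal with a monotonic query is monotone in the interpretation: if J ≤ I pointwise, then J(ψ::A) ≤ I(ψ::A). -/
/-- `G ≤max t`: G ≤ t and no addition-free G' (member of C) satisfies G < G' ≤ t. -/
def leqmax {V : Type*} [CompleteLattice V] (C : Set V) (G t : V) : Prop :=
  G ≤ t ∧ ∀ G' ∈ C, G < G' → ¬ G' ≤ t

/-- Valuation of the causal literal (ψ :: A) when the atom A has value t:
the join of all addition-free G with G ≤max t and ψ(G,t) = 1. -/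
def cval {V : Type*} [CompleteLattice V] (C : Set V) (ψ : V → V → Prop) (t : V) : V :=
  sSup {G | G ∈ C ∧ leqmax C G t ∧ ψ G t}

/-- The valuation of a causal literal with a monotonic query is monotone in the
interpretation: if J ≤ I pointwise, then J(ψ::A) ≤ I(ψ::A). -/
theorem cval_monotone {A : Type*} {V : Type*} [CompleteLattice V] (C : Set V)
    (hjoin : ∀ t : V, t = sSup {G | G ∈ C ∧ G ≤ t})
    (hmax : ∀ G ∈ C, ∀ t : V, G ≤ t → ∃ G' ∈ C, G ≤ G' ∧ leqmax C G' t)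
    (ψ : V → V → Prop)
    (hmono : ∀ G G' : V, G ∈ C → G' ∈ C → G ≤ G' → ∀ u w : V, ψ G u → ψ G' w)
    (I J : A → V) (hJI : ∀ a, J a ≤ I a) :
    ∀ a : A, cval C ψ (J a) ≤ cval C ψ (I a) := by
  intro a
  apply sSup_le
  rintro G ⟨hGC, hGmax, hψ⟩
  obtain ⟨G', hG'C, hGG', hG'max⟩ := hmax G hGC (I a) (hGmax.1.trans (hJI a))
  exact le_trans hGG' (le_sSup ⟨hG'C, hG'max, hmono G G' hGC hG'C hGG' _ _ hψ⟩)
end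

section
/- For any interpretation I, causal query ψ and atom A, the valuation of the reduced causal literal at I equals the valuation of the original literal at I: I(ψ^{I(A)}::A) = I(ψ::A). -/
/-- The reduct ψ^t of a causal query ψ with respect to a value t. -/
def reduct {V : Type*} [CompleteLattice V] (C : Set V) (ψ : V → V → Prop) (t : V) :
    V → V → Prop :=
  fun G _ => ∃ G' ∈ C, G' ≤ G ∧ leqmax C G' t ∧ ψ G' t

/-- For any interpretation I, causal query ψ and atom A, the valuation of the
reduced causal literal at I equals the valuation of the original literal at I:
I(ψ^{I(A)}::A) = I(ψ::A). -/
theorem cval_reduct_self {A : Type*} {V : Type*} [CompleteLattice V] (C : Set V)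
    (ψ : V → V → Prop) (I : A → V) :
    ∀ a : A, cval C (reduct C ψ (I a)) (I a) = cval C ψ (I a) := by
  intro a
  set t := I a
  unfold cval
  congr 1
  ext G
  simp only [Set.mem_setOf_eq, reduct]
  constructor
  · rintro ⟨hG, hmax, G', hG'C, hle, hmax', hψ⟩
    rcases lt_or_eq_of_le hle with h | h
    · exact absurd hmax.1 (hmax'.2 G hG h)
    · exact ⟨hG, hmax, h ▸ hψ⟩
  · rintro ⟨hG, hmax, hψ⟩
    exact ⟨hG, hmax, G, hG, le_rfl, hmax, hψ⟩
end

section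
/- For any two interpretations I and J with J ≤ I, any monotonic causal query ψ, and any atom A, J(ψ^{I(A)}::A) ≤ J(ψ::A). -/
/-- For any two interpretations I and J with J ≤ I, any monotonic causal query ψ,
and any atom A, J(ψ^{I(A)}::A) ≤ J(ψ::A). -/
theorem cval_reduct_le_of_monotone {A : Type*} {V : Type*} [CompleteLattice V]
    (C : Set V) (ψ : V → V → Prop)
    (hmono : ∀ G G' : V, G ∈ C → G' ∈ C → G ≤ G' → ∀ u w : V, ψ G u → ψ G' w)
    (I J : A → V) (hJI : ∀ a, J a ≤ I a) :
    ∀ a : A, cval C (reduct C ψ (I a)) (J a) ≤ cval C ψ (J a) := by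
  intro a
  apply sSup_le_sSup
  rintro G ⟨hGC, hmax, G', hG'C, hle, hmax', hψ⟩
  exact ⟨hGC, hmax, hmono G' G hG'C hGC hle _ _ hψ⟩
end

section
/- For anti-monotonic (general) causal queries, the reduct with respect to a larger interpretation decreases the valuation: if J ≤ I then J(ψ^{I(A)}::A) ≤ J(ψ::A), for every causal query ψ (antitone in its second argument) and every atom A. -/
/-- For general causal queries (antitone in the second argument), the reduct with
respect to a larger interpretation decreases the valuation:
if J ≤ I then J(ψ^{I(A)}::A) ≤ J(ψ::A), for every atom A. -/
theorem cval_reduct_le_of_antitone {A : Type*} {V : Type*} [CompleteLattice V]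
    (C : Set V) (ψ : V → V → Prop)
    (hanti : ∀ G : V, G ∈ C → ∀ t u : V, u ≤ t → ψ G t → ψ G u)
    (I J : A → V) (hJI : ∀ a, J a ≤ I a) :
    ∀ a : A, cval C (reduct C ψ (I a)) (J a) ≤ cval C ψ (J a) := by
  intro a
  apply sSup_le
  rintro G ⟨hGC, hGmax, G', hG'C, hG'G, hG'max, hψ⟩
  have hGI : G ≤ I a := hGmax.1.trans (hJI a)
  have hEq : G' = G := by
    rcases eq_or_lt_of_le hG'G with h | h
    · exact h
    · exact absurd hGI (hG'max.2 G hGC h)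
  subst hEq
  exact le_sSup ⟨hG'C, hGmax, hanti G' hG'C (I a) (J a) (hJI a) hψ⟩
end

section
/- Every causal stable model of a normal causal program P is a ≤-minimal model of P. -/
/-- Every causal stable model of a normal causal program P is a ≤-minimal model of P.
Abstract setting: reduced rule bodies `Bred I r` are monotone in the interpretation;
reduct stability at I: `Bred I r I = B r I`; for normal programs the reduct decreases
valuations below I: if J ≤ I then `Bred I r J ≤ B r J`; application is monotone in
its first argument. A causal stable model of P is the least model of P^I. Then any
model J of P with J ≤ I equals I. -/
theorem stable_model_is_minimal {A V R : Type*} [CompleteLattice V]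
    (app : V → V → V)
    (happmono : ∀ u v w : V, u ≤ v → app u w ≤ app v w)
    (B : R → (A → V) → V) (lab : R → V) (head : R → A)
    (Bred : (A → V) → R → (A → V) → V)
    (I : A → V)
    (hmono : ∀ r : R, Monotone (Bred I r))
    (hstab : ∀ r : R, Bred I r I = B r I)
    (hdec : ∀ J : A → V, J ≤ I → ∀ r : R, Bred I r J ≤ B r J)
    (hstable : IsLeast {J : A → V | ∀ r : R, app (Bred I r J) (lab r) ≤ J (head r)} I)
    (J : A → V) (hJI : J ≤ I)
    (hJmodel : ∀ r : R, app (B r J) (lab r) ≤ J (head r)) :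
    J = I := by
  have hJset : J ∈ {J : A → V | ∀ r : R, app (Bred I r J) (lab r) ≤ J (head r)} := by
    intro r
    exact le_trans (happmono _ _ _ (hdec J hJI r)) (hJmodel r)
  exact le_antisymm hJI (hstable.2 hJset)
end

section
/- Splitting lemma for monotonic programs: let P_b and P_t be monotonic programs such that no atom occurring in a body of P_b is the head of a rule of P_t; if I is the least model of P_b ∪ P_t and J is the least model of P_b, then I is the least model of J ∪ P_t (where J is viewed as a set of facts), and I and J agree on all atoms not occurring in heads of P_t. -/
/-- Splitting lemma for monotonic programs. Bottom program P_b has rules Rb with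
monotone body valuations Bb (depending only on the atoms `occb r` occurring in the
body), labels, and heads hb; top program P_t has rules Rt with monotone bodies Bt,
labels, and heads ht. No atom occurring in a body of P_b is the head of a rule of
P_t. If I is the least model of P_b ∪ P_t and J is the least model of P_b, then I is
the least model of J ∪ P_t (J viewed as facts: its models are the interpretations
above J), and I and J agree on all atoms not occurring in heads of P_t. -/
theorem splitting_lemma {A V Rb Rt : Type*} [CompleteLattice V]
    (app : V → V → V)
    (happmono : ∀ u v w : V, u ≤ v → app u w ≤ app v w)
    (Bb : Rb → (A → V) → V) (labb : Rb → V) (hb : Rb → A) (occb : Rb → Set A)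
    (Bt : Rt → (A → V) → V) (labt : Rt → V) (ht : Rt → A)
    (hBbmono : ∀ r : Rb, Monotone (Bb r))
    (hBtmono : ∀ r : Rt, Monotone (Bt r))
    (hocc : ∀ (r : Rb) (K K' : A → V), (∀ a ∈ occb r, K a = K' a) → Bb r K = Bb r K')
    (hsplit : ∀ (r : Rb) (a : A), a ∈ occb r → ∀ r' : Rt, ht r' ≠ a)
    (I J : A → V)
    (hI : IsLeast {K : A → V |
        (∀ r : Rb, app (Bb r K) (labb r) ≤ K (hb r)) ∧
        (∀ r : Rt, app (Bt r K) (labt r) ≤ K (ht r))} I)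
    (hJ : IsLeast {K : A → V | ∀ r : Rb, app (Bb r K) (labb r) ≤ K (hb r)} J) :
    IsLeast {K : A → V |
        J ≤ K ∧ ∀ r : Rt, app (Bt r K) (labt r) ≤ K (ht r)} I ∧
    ∀ a : A, (∀ r : Rt, ht r ≠ a) → I a = J a := by
  classical
  have hJI : J ≤ I := hJ.2 hI.1.1
  have key : ∀ K : A → V, J ≤ K → (∀ r : Rt, app (Bt r K) (labt r) ≤ K (ht r)) →
      I ≤ fun a => if ∃ r' : Rt, ht r' = a then K a else J a := by
    intro K hJK hKt
    set M : A → V := fun a => if ∃ r' : Rt, ht r' = a then K a else J a with hM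
    have hMK : M ≤ K := by
      intro a
      by_cases h : ∃ r' : Rt, ht r' = a
      · simp [hM, h]
      · simpa [hM, h] using hJK a
    have hMJ : J ≤ M := by
      intro a
      by_cases h : ∃ r' : Rt, ht r' = a
      · simpa [hM, h] using hJK a
      · simp [hM, h]
    apply hI.2
    constructor
    · intro r
      have heq : Bb r M = Bb r J := by
        apply hocc
        intro a ha
        have hna : ¬ ∃ r' : Rt, ht r' = a := by
          rintro ⟨r', rfl⟩; exact hsplit r _ ha r' rfl
        simp [hM, hna]
      rw [heq]
      exact le_trans (hJ.1 r) (hMJ _)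
    · intro r
      have h1 : app (Bt r M) (labt r) ≤ app (Bt r K) (labt r) :=
        happmono _ _ _ (hBtmono r hMK)
      have h2 : M (ht r) = K (ht r) := by simp [hM, show ∃ r' : Rt, ht r' = ht r from ⟨r, rfl⟩]
      rw [h2]
      exact le_trans h1 (hKt r)
  constructor
  · constructor
    · exact ⟨hJI, hI.1.2⟩
    · intro K hK
      refine le_trans (key K hK.1 hK.2) ?_
      intro a
      by_cases h : ∃ r' : Rt, ht r' = a
      · simp [h]
      · simpa [h] using hK.1 a
  · intro a hna
    refine le_antisymm ?_ (hJI a)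
    have h := key I hJI hI.1.2 a
    simpa [show ¬ ∃ r' : Rt, ht r' = a from fun ⟨r', h'⟩ => hna r' h'] using h
end
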